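/- Exotic isomorphisms: The three elliptic root systems R(BCC_l^{(4)}), R(C^∨BC_l^{(1)}), and R(C^∨C_l^{(2)◇}) are pairwise isomorphic as root systems; that is, for each pair there exist a linear automorphism φ of F and c > 0 with I(φ(x),φ(y)) = c·I(x,y) for all x,y ∈ F carrying one set onto the other. -/

import Mathlib

open Pointwise

noncomputable section

/-- The ambient space `F = ℝ^{l+2}`, with coordinates `0,…,l-1` for the finite part
and coordinates `l, l+1` corresponding to the radical vectors `a, b`. -/
abbrev V (l : ℕ) : Type := Fin (l + 2) → ℝ

/-- The orthonormal vectors `ε_i`. -/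
def εv (l : ℕ) (i : Fin l) : V l := Pi.single (Fin.castAdd 2 i) 1

/-- The radical vector `a`. -/
def av (l : ℕ) : V l := Pi.single (Fin.natAdd l (0 : Fin 2)) 1

/-- The radical vector `b`. -/
def bv (l : ℕ) : V l := Pi.single (Fin.natAdd l (1 : Fin 2)) 1

/-- The positive semi-definite symmetric bilinear form `I` of signature `(l,2,0)`,
with radical `ℝa + ℝb`. -/
def Iform (l : ℕ) (x y : V l) : ℝ :=
  ∑ i : Fin l, x (Fin.castAdd 2 i) * y (Fin.castAdd 2 i)

/-- Short roots of the finite root system `BC_l`. -/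
def BCs (l : ℕ) : Set (V l) := ⋃ i : Fin l, {εv l i, -εv l i}

/-- Middle-length roots of the finite root system `BC_l`. -/
def BCm (l : ℕ) : Set (V l) :=
  ⋃ (i : Fin l) (j : Fin l) (_ : i ≠ j),
    {εv l i + εv l j, εv l i - εv l j, -εv l i - εv l j}

/-- Long roots of the finite root system `BC_l`. -/
def BCl (l : ℕ) : Set (V l) := ⋃ i : Fin l, {(2 : ℝ) • εv l i, -((2 : ℝ) • εv l i)}

/-- The finite root system `BC_l`. -/
def BCfull (l : ℕ) : Set (V l) := BCs l ∪ BCm l ∪ BCl l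

/-- The subset `(kℤ)v` of `F`. -/
def Zv (l : ℕ) (k : ℤ) (v : V l) : Set (V l) := {x | ∃ n : ℤ, x = ((k * n : ℤ) : ℝ) • v}

/-- The subset `(kℤ)a`. -/
def Za (l : ℕ) (k : ℤ) : Set (V l) := Zv l k (av l)

/-- The subset `(kℤ)b`. -/
def Zb (l : ℕ) (k : ℤ) : Set (V l) := Zv l k (bv l)

/-- The subset `(1+2ℤ)a`. -/
def oddZa (l : ℕ) : Set (V l) := {x | ∃ n : ℤ, x = ((1 + 2 * n : ℤ) : ℝ) • av l}

/-- The subset `L_{i,j}^{s1,s2} = {s2·m·a + s1·n·b : (m-i)(n-j) ≡ 0 mod 2}`;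
`L_{i,j} = Lset l i j 1 1`. -/
def Lset (l : ℕ) (i j s1 s2 : ℤ) : Set (V l) :=
  {x | ∃ m n : ℤ, (2 : ℤ) ∣ ((m - i) * (n - j)) ∧
    x = ((s2 * m : ℤ) : ℝ) • av l + ((s1 * n : ℤ) : ℝ) • bv l}

/-- The subset `{ma + 2nb : m ≡ n mod 2}` occurring in the ◇-type system. -/
def diaL (l : ℕ) : Set (V l) :=
  {x | ∃ m n : ℤ, (2 : ℤ) ∣ (m - n) ∧ x = ((m : ℤ) : ℝ) • av l + ((2 * n : ℤ) : ℝ) • bv l}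

/-- The four types of non-reduced affine root systems. -/
inductive AffType | BCC | CvBC | BBv | CvC

/-- First tier number: the multiplier of `ℤb` on the middle part. -/
def tfm : AffType → ℤ | .BCC => 1 | .CvBC => 2 | .BBv => 1 | .CvC => 2

/-- The multiplier of `ℤb` on the long part. -/
def tfl : AffType → ℤ | .BCC => 1 | .CvBC => 4 | .BBv => 2 | .CvC => 2

/-- Short part of the affine root system `R(X_l)`. -/
def AffS (l : ℕ) (_X : AffType) : Set (V l) := BCs l + Zb l 1

/-- Middle part of the affine root system `R(X_l)`. -/
def AffM (l : ℕ) (X : AffType) : Set (V l) := BCm l + Zb l (tfm X)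

/-- Long part of the affine root system `R(X_l)`. -/
def AffL (l : ℕ) (X : AffType) : Set (V l) := BCl l + Zb l (tfl X)

/-- The affine root system `R(X_l)` for `X ∈ {BCC, C^∨BC, BB^∨, C^∨C}`. -/
def Aff (l : ℕ) (X : AffType) : Set (V l) := AffS l X ∪ AffM l X ∪ AffL l X

/-- The reduced classical types `BC_l^{(1,2)}, BC_l^{(4,2)}, BC_l^{(2,2)σ}(1), BC_l^{(2,2)σ}(2)`
(for `X = BCC, C^∨BC, BB^∨, C^∨C` respectively). -/
def redClassical (l : ℕ) (X : AffType) : Set (V l) :=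
  (AffS l X + Za l 1) ∪ (AffM l X + Za l 1) ∪ (AffL l X + oddZa l)

/-- `R(BC_l^{(1,1)∗})`. -/
def RBC11star (l : ℕ) : Set (V l) :=
  (AffS l .BCC + Za l 1) ∪ (AffM l .BCC + Za l 1) ∪ (BCl l + Lset l 1 1 1 1)

/-- `R(BC_l^{(4,4)∗})`. -/
def RBC44star (l : ℕ) : Set (V l) :=
  (BCs l + Lset l 1 1 1 1) ∪ (AffM l .CvBC + Za l 2) ∪ (AffL l .CvBC + Za l 4)

/-- `R(X_l^{(1)})`. -/
def E1 (l : ℕ) (X : AffType) : Set (V l) := Aff l X + Za l 1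

/-- `R(X_l^{(2)}(i))`. -/
def E2 (l : ℕ) (X : AffType) (i : ℤ) : Set (V l) :=
  (AffS l X + Za l 1) ∪ (AffM l X + Za l i) ∪ (AffL l X + Za l 2)

/-- `R(X_l^{(4)})`. -/
def E4 (l : ℕ) (X : AffType) : Set (V l) :=
  (AffS l X + Za l 1) ∪ (AffM l X + Za l 2) ∪ (AffL l X + Za l 4)

/-- `R(BCC_l^{(1)∗})`-type systems: `BCC1star l 0 0 = R(BCC_l^{(1)∗_0})`,
`BCC1star l 0 1 = R(BCC_l^{(1)∗_{0'}})`, `BCC1star l 1 1 = R(BCC_l^{(1)∗_1}) = R(BC_l^{(1,1)∗})`. -/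
def BCC1star (l : ℕ) (i j : ℤ) : Set (V l) :=
  (AffS l .BCC + Za l 1) ∪ (AffM l .BCC + Za l 1) ∪ (BCl l + Lset l i j 1 1)

/-- `R(BCC_l^{(2)∗_p})`. -/
def BCC2star (l : ℕ) (p : ℤ) : Set (V l) :=
  (AffS l .BCC + Za l 1) ∪ (AffM l .BCC + Za l 2) ∪ (BCl l + Lset l p p 1 2)

/-- `R(C^∨BC_l^{(2)∗_p})`. -/
def CvBC2star (l : ℕ) (p : ℤ) : Set (V l) :=
  (BCs l + Lset l p p 1 1) ∪ (AffM l .CvBC + Za l 2) ∪ (AffL l .CvBC + Za l 2)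

/-- `R(C^∨BC_l^{(4)∗})`-type systems: `CvBC4star l 0 0 = R(C^∨BC_l^{(4)∗_0})`,
`CvBC4star l 0 1 = R(C^∨BC_l^{(4)∗_{0'}})`, `CvBC4star l 1 1 = R(C^∨BC_l^{(4)∗_1}) = R(BC_l^{(4,4)∗})`. -/
def CvBC4star (l : ℕ) (i j : ℤ) : Set (V l) :=
  (BCs l + Lset l i j 1 1) ∪ (AffM l .CvBC + Za l 2) ∪ (AffL l .CvBC + Za l 4)

/-- `R(BB_2^{∨(2)∗})` (its defining pattern, written for general `l`). -/
def BB2star (l : ℕ) : Set (V l) :=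
  (BCs l + Za l 1 + Zb l 1) ∪ (BCm l + Lset l 0 0 1 1) ∪ (BCl l + Za l 2 + Zb l 2)

/-- `R(C^∨C_l^{(1)∗_p})`. -/
def CvC1star (l : ℕ) (p : ℤ) : Set (V l) :=
  (AffS l .CvC + Za l 1) ∪ (AffM l .CvC + Za l 1) ∪ (BCl l + Lset l p p 2 1)

/-- `R(C^∨C_l^{(2)∗})`-type systems: `CvC2star l 0 0 = R(C^∨C_l^{(2)∗_0})`,
`CvC2star l 1 1 = R(C^∨C_l^{(2)∗_1})`, `CvC2star l 1 0 = R(C^∨C_l^{(2)∗_{1'}})`. -/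
def CvC2star (l : ℕ) (i j : ℤ) : Set (V l) :=
  (BCs l + Lset l 0 0 1 1) ∪ (AffM l .CvC + Za l 2) ∪ (BCl l + Lset l i j 2 2)

/-- `R(C^∨C_l^{(2)∗_s})`. -/
def CvC2starS (l : ℕ) : Set (V l) :=
  (BCs l + Lset l 0 0 1 1) ∪ (AffM l .CvC + Za l 2) ∪ (AffL l .CvC + Za l 2)

/-- `R(C^∨C_l^{(2)∗_l})`. -/
def CvC2starL (l : ℕ) : Set (V l) :=
  (AffS l .CvC + Za l 1) ∪ (AffM l .CvC + Za l 2) ∪ (BCl l + Lset l 0 0 2 2)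

/-- `R(C^∨C_l^{(4)∗_p})`. -/
def CvC4star (l : ℕ) (p : ℤ) : Set (V l) :=
  (BCs l + Lset l p p 1 1) ∪ (AffM l .CvC + Za l 2) ∪ (AffL l .CvC + Za l 4)

/-- `R(C^∨C_l^{(2)◇})`. -/
def CvC2dia (l : ℕ) : Set (V l) :=
  (AffS l .CvC + Za l 1) ∪ (AffM l .CvC + Za l 1) ∪ (BCl l + diaL l)

/-- The reflection `w_α`. -/
def reflV (l : ℕ) (α x : V l) : V l := x - (2 * Iform l x α / Iform l α α) • α

/-- A generalized root system in `(F, I)`; since `I` has signature `(l,2,0)`, this is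
exactly an elliptic root system. -/
structure IsERS (l : ℕ) (R : Set (V l)) : Prop where
  /-- `R` is discrete. -/
  discrete : ∀ x ∈ R, ∃ ε > 0, ∀ y ∈ R, ‖x - y‖ < ε → y = x
  /-- The root lattice `Q(R)` is full in `F`. -/
  spans : Submodule.span ℝ R = ⊤
  /-- roots are non-isotropic. -/
  nonisotropic : ∀ α ∈ R, Iform l α α ≠ 0
  /-- integrality: `2 I(α,β)/I(α,α) ∈ ℤ`. -/
  integral : ∀ α ∈ R, ∀ β ∈ R, ∃ n : ℤ, 2 * Iform l α β = (n : ℝ) * Iform l α α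
  /-- each reflection `w_α` maps `R` onto `R`. -/
  reflects : ∀ α ∈ R, reflV l α '' R = R
  /-- irreducibility. -/
  irred : ∀ R1 R2 : Set (V l), R1 ∪ R2 = R →
    (∀ x ∈ R1, ∀ y ∈ R2, Iform l x y = 0) → R1 = ∅ ∨ R2 = ∅

/-- `R` is reduced. -/
def IsReducedRS (l : ℕ) (R : Set (V l)) : Prop := ∀ α ∈ R, (2 : ℝ) • α ∉ R

/-- `R` is non-reduced. -/
def IsNonReducedRS (l : ℕ) (R : Set (V l)) : Prop := ∃ α ∈ R, (2 : ℝ) • α ∈ R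

/-- The radical `ℝa + ℝb` of `I`. -/
def radSpan (l : ℕ) : Submodule ℝ (V l) := Submodule.span ℝ {av l, bv l}

/-- The marking line `G = ℝa`. -/
def Ga (l : ℕ) : Submodule ℝ (V l) := Submodule.span ℝ {av l}

/-- `G` is a marking of `R`: a one-dimensional subspace of `rad(I)` such that
`G ∩ Q(R)` is full in `G`. -/
def IsMarking (l : ℕ) (R : Set (V l)) (G : Submodule ℝ (V l)) : Prop :=
  G ≤ radSpan l ∧ Module.finrank ℝ G = 1 ∧
    ∃ v : V l, v ≠ 0 ∧ v ∈ G ∧ v ∈ AddSubgroup.closure R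

/-- `φ` rescales the form `I` by the factor `c`. -/
def IsSimilarity (l : ℕ) (φ : V l ≃ₗ[ℝ] V l) (c : ℝ) : Prop :=
  ∀ x y : V l, Iform l (φ x) (φ y) = c * Iform l x y

/-- Isomorphism of root systems in `(F, I)`. -/
def IsoRS (l : ℕ) (R R' : Set (V l)) : Prop :=
  ∃ (φ : V l ≃ₗ[ℝ] V l) (c : ℝ), 0 < c ∧ IsSimilarity l φ c ∧ φ '' R = R'

/-- Isomorphism of marked root systems (with marking `ℝa` on both sides). -/
def IsoRSa (l : ℕ) (R R' : Set (V l)) : Prop :=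
  ∃ (φ : V l ≃ₗ[ℝ] V l) (c : ℝ), 0 < c ∧ IsSimilarity l φ c ∧
    φ '' (Ga l : Set (V l)) = (Ga l : Set (V l)) ∧ φ '' R = R'

/-- The quotient `R/G` (image of `R` in `F/G`) is non-reduced. -/
def QuotNonReduced (l : ℕ) (R : Set (V l)) (G : Submodule ℝ (V l)) : Prop :=
  ∃ α ∈ R, ∃ β ∈ R, G.mkQ β = (2 : ℝ) • G.mkQ α

/-- The quotient `R/G` is isomorphic, as an affine root system, to the affine root system
`X ⊆ span(ε_1,…,ε_l,b)`: encoded via `p = ψ ∘ (F → F/G)` for an isomorphism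
`ψ : F/G ≅ span(ε_1,…,ε_l,b)` with `Ī(u,v) = c·I(ψu,ψv)` and `ψ(R/G) = X`. -/
def QuotIsType (l : ℕ) (R : Set (V l)) (G : Submodule ℝ (V l)) (X : Set (V l)) : Prop :=
  ∃ (p : V l →ₗ[ℝ] V l) (c : ℝ), 0 < c ∧
    LinearMap.ker p = G ∧
    LinearMap.range p = Submodule.span ℝ (Set.range (εv l) ∪ {bv l}) ∧
    (∀ x y : V l, Iform l x y = c * Iform l (p x) (p y)) ∧
    p '' R = X

end

noncomputable section

/-!
Both isomorphisms are isometries of `I` that fix every `ε_i` and act only on the radical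
`ℝa + ℝb`. Swapping `a` and `b` turns the tiers `ℤa, 2ℤa, 4ℤa` of `BCC^{(4)}` in the
`a`-direction into the tiers `ℤb, 2ℤb, 4ℤb` of `C^∨BC`. The transvection `a ↦ a + 2b` then
replaces `ℤa + kℤb` by `ℤ(a + 2b) + kℤb`: for `k ∣ 2` this is again `ℤa + kℤb`, while for
`k = 4` it is `{ma + 2nb : m ≡ n mod 2}`, the long part of `C^∨C^{(2)◇}`.
-/

variable {l : ℕ}

theorem IsSimilarity.trans {f g : V l ≃ₗ[ℝ] V l} {c d : ℝ} (hf : IsSimilarity l f c)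
    (hg : IsSimilarity l g d) : IsSimilarity l (f.trans g) (d * c) := fun x y => by
  rw [LinearEquiv.trans_apply, LinearEquiv.trans_apply, hg, hf, mul_assoc]

theorem IsoRS.trans {R R' R'' : Set (V l)} (h : IsoRS l R R') (h' : IsoRS l R' R'') :
    IsoRS l R R'' := by
  obtain ⟨f, c, hc, hf, rfl⟩ := h
  obtain ⟨g, d, hd, hg, rfl⟩ := h'
  exact ⟨f.trans g, d * c, mul_pos hd hc, hf.trans hg, (Set.image_image g f R).symm⟩

theorem isSimilarity_one_of_apply_castAdd {f : V l ≃ₗ[ℝ] V l}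
    (hf : ∀ x i, f x (Fin.castAdd 2 i) = x (Fin.castAdd 2 i)) : IsSimilarity l f 1 := by
  intro x y
  simp only [Iform, hf, one_mul]

theorem image_Zv (f : V l ≃ₗ[ℝ] V l) (k : ℤ) (v : V l) : f '' Zv l k v = Zv l k (f v) := by
  ext x
  simp only [Zv, Set.mem_image, Set.mem_ofPred_eq]
  constructor
  · rintro ⟨y, ⟨n, rfl⟩, rfl⟩
    exact ⟨n, map_smul f _ v⟩
  · rintro ⟨n, rfl⟩
    exact ⟨_, ⟨n, rfl⟩, map_smul f _ v⟩

theorem image_BCs_of_apply_εv {f : V l ≃ₗ[ℝ] V l} (hf : ∀ i, f (εv l i) = εv l i) :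
    f '' BCs l = BCs l := by
  simp only [BCs, Set.image_iUnion, Set.image_pair, map_neg, hf]

theorem image_BCm_of_apply_εv {f : V l ≃ₗ[ℝ] V l} (hf : ∀ i, f (εv l i) = εv l i) :
    f '' BCm l = BCm l := by
  simp only [BCm, Set.image_iUnion, Set.image_insert_eq, Set.image_singleton,
    map_add, map_sub, map_neg, hf]

theorem image_BCl_of_apply_εv {f : V l ≃ₗ[ℝ] V l} (hf : ∀ i, f (εv l i) = εv l i) :
    f '' BCl l = BCl l := by
  simp only [BCl, Set.image_iUnion, Set.image_pair, map_neg, map_smul, hf]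

theorem Zv_add_Zv_add_smul {k m : ℤ} (hkm : k ∣ m) (v w : V l) :
    Zv l k v + Zv l 1 (w + (m : ℝ) • v) = Zv l k v + Zv l 1 w := by
  obtain ⟨t, rfl⟩ := hkm
  ext x
  simp only [Zv, Set.mem_add, Set.mem_ofPred_eq]
  constructor
  · rintro ⟨_, ⟨n, rfl⟩, _, ⟨p, rfl⟩, rfl⟩
    refine ⟨_, ⟨n + p * t, rfl⟩, _, ⟨p, rfl⟩, ?_⟩
    push_cast
    match_scalars <;> ring
  · rintro ⟨_, ⟨n, rfl⟩, _, ⟨p, rfl⟩, rfl⟩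
    refine ⟨_, ⟨n - p * t, rfl⟩, _, ⟨p, rfl⟩, ?_⟩
    push_cast
    match_scalars <;> ring

theorem Zb_four_add_Zv_eq_diaL : Zb l 4 + Zv l 1 (av l + (2 : ℝ) • bv l) = diaL l := by
  ext x
  simp only [Zb, Zv, diaL, Set.mem_add, Set.mem_ofPred_eq]
  constructor
  · rintro ⟨_, ⟨n, rfl⟩, _, ⟨p, rfl⟩, rfl⟩
    refine ⟨p, 2 * n + p, ⟨-n, by ring⟩, ?_⟩
    push_cast
    match_scalars <;> ring
  · rintro ⟨m, n, ⟨c, hc⟩, rfl⟩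
    refine ⟨_, ⟨-c, rfl⟩, _, ⟨m, rfl⟩, ?_⟩
    have hcR : (m : ℝ) - n = 2 * c := by exact_mod_cast hc
    push_cast
    match_scalars <;> linarith

theorem castAdd_ne_natAdd {m n : ℕ} (i : Fin m) (j : Fin n) : Fin.castAdd n i ≠ Fin.natAdd m j :=
  Fin.ne_of_val_ne (by simp only [Fin.val_castAdd, Fin.val_natAdd]; omega)

def swapAB (l : ℕ) : V l ≃ₗ[ℝ] V l :=
  LinearEquiv.funCongrLeft ℝ ℝ (Equiv.swap (Fin.natAdd l 0) (Fin.natAdd l 1))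

theorem swapAB_single (k : Fin (l + 2)) :
    swapAB l (Pi.single k 1) = Pi.single (Equiv.swap (Fin.natAdd l 0) (Fin.natAdd l 1) k) 1 := by
  funext j
  simp [swapAB, LinearMap.funLeft, Pi.single_apply, Equiv.swap_apply_eq_iff]

theorem swapAB_εv (i : Fin l) : swapAB l (εv l i) = εv l i := by
  rw [εv, swapAB_single,
    Equiv.swap_apply_of_ne_of_ne (castAdd_ne_natAdd i 0) (castAdd_ne_natAdd i 1)]

theorem swapAB_av : swapAB l (av l) = bv l := by
  rw [av, swapAB_single, Equiv.swap_apply_left, bv]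

theorem swapAB_bv : swapAB l (bv l) = av l := by
  rw [bv, swapAB_single, Equiv.swap_apply_right, av]

theorem isSimilarity_swapAB : IsSimilarity l (swapAB l) 1 :=
  isSimilarity_one_of_apply_castAdd fun x i => by
    simp [swapAB, LinearMap.funLeft,
      Equiv.swap_apply_of_ne_of_ne (castAdd_ne_natAdd i 0) (castAdd_ne_natAdd i 1)]

theorem swapAB_image_E4_BCC : swapAB l '' E4 l .BCC = E1 l .CvBC := by
  have hZa (k : ℤ) : swapAB l '' Za l k = Zb l k := by rw [Za, image_Zv, swapAB_av, Zb]
  have hZb (k : ℤ) : swapAB l '' Zb l k = Za l k := by rw [Zb, image_Zv, swapAB_bv, Za]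
  simp only [E4, E1, Aff, AffS, AffM, AffL, Set.union_add, Set.image_union, Set.image_add,
    image_BCs_of_apply_εv swapAB_εv, image_BCm_of_apply_εv swapAB_εv,
    image_BCl_of_apply_εv swapAB_εv, hZa, hZb, tfm, tfl]
  simp only [add_right_comm _ (Za l 1)]

def shearAB (l : ℕ) : V l ≃ₗ[ℝ] V l :=
  LinearEquiv.transvection (f := LinearMap.proj (Fin.natAdd l 0)) (v := (2 : ℝ) • bv l)
    (by simp [bv, Fin.ext_iff])

theorem shearAB_apply (x : V l) : shearAB l x = x + x (Fin.natAdd l 0) • (2 : ℝ) • bv l := rfl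

theorem shearAB_εv (i : Fin l) : shearAB l (εv l i) = εv l i := by
  simp [shearAB_apply, εv, Pi.single_eq_of_ne (castAdd_ne_natAdd i 0).symm]

theorem shearAB_av : shearAB l (av l) = av l + (2 : ℝ) • bv l := by
  simp [shearAB_apply, av]

theorem shearAB_bv : shearAB l (bv l) = bv l := by
  simp [shearAB_apply, bv, Fin.ext_iff]

theorem isSimilarity_shearAB : IsSimilarity l (shearAB l) 1 :=
  isSimilarity_one_of_apply_castAdd fun x i => by
    simp [shearAB_apply, bv, Pi.single_eq_of_ne (castAdd_ne_natAdd i 1)]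

theorem shearAB_image_E1_CvBC : shearAB l '' E1 l .CvBC = CvC2dia l := by
  have hZa : shearAB l '' Za l 1 = Zv l 1 (av l + (2 : ℝ) • bv l) := by
    rw [Za, image_Zv, shearAB_av]
  have hZb (k : ℤ) : shearAB l '' Zb l k = Zb l k := by rw [Zb, image_Zv, shearAB_bv]
  have hZb_add {k : ℤ} (hk : k ∣ 2) :
      Zb l k + Zv l 1 (av l + (2 : ℝ) • bv l) = Zb l k + Za l 1 := by
    have := Zv_add_Zv_add_smul hk (bv l) (av l)
    rwa [Int.cast_ofNat] at this
  simp only [E1, CvC2dia, Aff, AffS, AffM, AffL, Set.union_add, Set.image_union, Set.image_add,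
    image_BCs_of_apply_εv shearAB_εv, image_BCm_of_apply_εv shearAB_εv,
    image_BCl_of_apply_εv shearAB_εv, hZa, hZb, tfm, tfl, add_assoc]
  rw [hZb_add (one_dvd 2), hZb_add dvd_rfl, Zb_four_add_Zv_eq_diaL]

theorem exotic_isomorphisms_general {l : ℕ} :
    IsoRS l (E4 l .BCC) (E1 l .CvBC) ∧
    IsoRS l (E1 l .CvBC) (CvC2dia l) ∧
    IsoRS l (E4 l .BCC) (CvC2dia l) := by
  have h₁ : IsoRS l (E4 l .BCC) (E1 l .CvBC) :=
    ⟨swapAB l, 1, one_pos, isSimilarity_swapAB, swapAB_image_E4_BCC⟩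
  have h₂ : IsoRS l (E1 l .CvBC) (CvC2dia l) :=
    ⟨shearAB l, 1, one_pos, isSimilarity_shearAB, shearAB_image_E1_CvBC⟩
  exact ⟨h₁, h₂, h₁.trans h₂⟩

/-- **Exotic isomorphisms**: `R(BCC_l^{(4)}) ≅ R(C^∨BC_l^{(1)}) ≅ R(C^∨C_l^{(2)◇})`
are pairwise isomorphic as root systems. -/
theorem exotic_isomorphisms {l : ℕ} (hl : 1 ≤ l) :
    IsoRS l (E4 l .BCC) (E1 l .CvBC) ∧
    IsoRS l (E1 l .CvBC) (CvC2dia l) ∧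
    IsoRS l (E4 l .BCC) (CvC2dia l) :=
  exotic_isomorphisms_general

end
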